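/- Let x > 0 and let m ≥ 1 be a natural number. Suppose d_0 = 1 and d_m = (1/m) ∑_{k=1}^{m} d_{m−k}·(a_{k+1} + (−1)^k x^k) defines a sequence, where a_k are given. If a_k satisfies (ν+1,m)/2^m = ∑_{k=0}^{m} ((ν,m−k)/2^{m−k}) a_k for all m ≤ M with ν = 2n+3/2, then d_m = ∑_{k=0}^{m} (−1)^k ((ν, m−k)/2^{m−k}) x^k for all m ≤ M−1. -/

import Mathlib

noncomputable def hankelSymbol (ν : ℝ) (n : ℕ) : ℝ :=
  (∏ k ∈ Finset.range n, (4 * ν ^ 2 - (2 * (k : ℝ) + 1) ^ 2)) /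
    (n.factorial * 2 ^ (2 * n))

/-!
Write `θ = X · d/dX`, `B = ∑ (ν, p) / 2^p X^p`, `E = ∑ (-x)^k X^k = 1 / (1 + x X)` and
`D = ∑ d_m X^m`. The recursion for `d` says `θ D = D G` with
`G = ∑_{k ≥ 1} (a_{k+1} + (-x)^k) X^k`. The contiguity relation
`(ν + 1, p + 1) = (ν, p + 1) + (2ν + 2p + 1) (ν, p)` turns the hypothesis on `a` into
`θ B ≡ B A (mod X^M)` with `A = ∑_{k ≥ 1} a_{k+1} X^k`, while `θ E = E (E - 1)`. Since `θ` is a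
derivation, `θ (B E) ≡ B E G (mod X^M)`, and as `G` has no constant term, a solution of
`θ F ≡ F G` is determined modulo `X^M` by `F(0)`; hence `D ≡ B E`.
-/

open PowerSeries

namespace PowerSeries
variable {R : Type*} [CommRing R]

theorem coeff_X_mul_derivative (f : R⟦X⟧) (n : ℕ) :
    coeff n (X * d⁄dX R f) = n * coeff n f := by
  cases n with
  | zero => simp
  | succ n => rw [coeff_succ_X_mul, coeff_derivative, mul_comm]; push_cast; rfl

theorem coeff_mk_mul_mk (f g : ℕ → R) (n : ℕ) :
    coeff n (mk f * mk g) = ∑ k ∈ Finset.range (n + 1), f (n - k) * g k := by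
  rw [mul_comm, coeff_mul,
    Finset.Nat.sum_antidiagonal_eq_sum_range_succ fun i j => coeff i (mk g) * coeff j (mk f)]
  simp only [coeff_mk, mul_comm]

theorem X_pow_dvd_X_mul_derivative_mul_sub {M : ℕ} {f g u v : R⟦X⟧}
    (hf : X ^ M ∣ X * d⁄dX R f - f * u) (hg : X ^ M ∣ X * d⁄dX R g - g * v) :
    X ^ M ∣ X * d⁄dX R (f * g) - f * g * (u + v) := by
  have key : X * d⁄dX R (f * g) - f * g * (u + v) =
      f * (X * d⁄dX R g - g * v) + g * (X * d⁄dX R f - f * u) := by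
    rw [Derivation.leibniz, smul_eq_mul, smul_eq_mul]; ring
  rw [key]
  exact dvd_add (dvd_mul_of_dvd_right hg f) (dvd_mul_of_dvd_right hf g)

theorem X_mul_derivative_mk_pow (c : R) :
    X * d⁄dX R (mk (c ^ ·)) = mk (c ^ ·) * (mk (c ^ ·) - 1) := by
  ext m
  have hsum : ∑ k ∈ Finset.range (m + 1), c ^ (m - k) * c ^ k = (m + 1) * c ^ m := by
    rw [Finset.sum_congr rfl fun k hk => by
      rw [← pow_add, Nat.sub_add_cancel (Nat.lt_succ_iff.mp (Finset.mem_range.mp hk))]]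
    simp
  rw [coeff_X_mul_derivative, mul_sub, mul_one, map_sub, coeff_mk_mul_mk, hsum, coeff_mk]
  ring

theorem X_pow_dvd_X_mul_derivative_mul_mk_pow_sub {M : ℕ} {f u : R⟦X⟧} (c : R)
    (hf : X ^ M ∣ X * d⁄dX R f - f * u) :
    X ^ M ∣ X * d⁄dX R (f * mk (c ^ ·)) - f * mk (c ^ ·) * (u + (mk (c ^ ·) - 1)) := by
  refine X_pow_dvd_X_mul_derivative_mul_sub hf ?_
  rw [X_mul_derivative_mk_pow, sub_self]
  exact dvd_zero _

theorem constantCoeff_mul_eq_zero_of_X_pow_dvd {M : ℕ} (hM : 0 < M) {f u : R⟦X⟧}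
    (h : X ^ M ∣ X * d⁄dX R f - f * u) : constantCoeff f * constantCoeff u = 0 := by
  simpa using X_pow_dvd_iff.mp h 0 hM

section Field
variable {K : Type*} [Field K] [CharZero K]

theorem X_pow_dvd_sub_of_X_mul_derivative {M : ℕ} {f g u : K⟦X⟧}
    (h₀ : constantCoeff f = constantCoeff g) (hu : constantCoeff u = 0)
    (hf : X ^ M ∣ X * d⁄dX K f - f * u) (hg : X ^ M ∣ X * d⁄dX K g - g * u) :
    X ^ M ∣ f - g := by
  have h : X ^ M ∣ X * d⁄dX K (f - g) - (f - g) * u := by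
    convert dvd_sub hf hg using 1
    rw [map_sub]
    ring
  rw [X_pow_dvd_iff] at h ⊢
  intro m hm
  induction m using Nat.strong_induction_on with
  | _ m ih =>
    rcases Nat.eq_zero_or_pos m with rfl | hm0
    · simp [h₀]
    have hprod : coeff m ((f - g) * u) = 0 := by
      rw [coeff_mul]
      refine Finset.sum_eq_zero fun p hp => ?_
      rw [Finset.HasAntidiagonal.mem_antidiagonal] at hp
      rcases Nat.eq_zero_or_pos p.2 with h2 | h2
      · simp [h2, hu]
      · rw [ih p.1 (by omega) (by omega), zero_mul]
    have hm' := h m hm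
    rw [map_sub, coeff_X_mul_derivative, hprod, sub_zero] at hm'
    exact (mul_eq_zero.mp hm').resolve_left (Nat.cast_ne_zero.mpr hm0.ne')

theorem X_mul_derivative_mk_of_recursion {d g : ℕ → K}
    (hd : ∀ m, 1 ≤ m → d m = 1 / (m : K) * ∑ k ∈ Finset.Icc 1 m, d (m - k) * g k) :
    X * d⁄dX K (mk d) = mk d * (mk g - C (g 0)) := by
  ext m
  rw [coeff_X_mul_derivative, coeff_mk, mul_sub, map_sub, coeff_mk_mul_mk, coeff_mul_C, coeff_mk]
  rcases Nat.eq_zero_or_pos m with rfl | hm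
  · simp
  have hmd : (m : K) * d m = ∑ k ∈ Finset.Icc 1 m, d (m - k) * g k := by
    rw [hd m hm, ← mul_assoc, mul_one_div_cancel (Nat.cast_ne_zero.mpr hm.ne'), one_mul]
  rw [Finset.range_eq_Ico, Finset.sum_eq_sum_Ico_succ_bot (Nat.succ_pos m), zero_add,
    Nat.succ_eq_add_one, Finset.Ico_add_one_right_eq_Icc, Nat.sub_zero, hmd]
  ring

end Field

end PowerSeries

@[simp]
theorem hankelSymbol_zero (ν : ℝ) : hankelSymbol ν 0 = 1 := by
  simp [hankelSymbol]

theorem hankelSymbol_succ (ν : ℝ) (p : ℕ) :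
    hankelSymbol ν (p + 1) =
      hankelSymbol ν p * (4 * ν ^ 2 - (2 * p + 1) ^ 2) / (4 * (p + 1)) := by
  simp only [hankelSymbol, Finset.prod_range_succ, Nat.factorial_succ, mul_add, pow_add]
  push_cast
  field_simp
  ring

theorem hankelSymbol_add_one_succ (ν : ℝ) (p : ℕ) :
    hankelSymbol (ν + 1) (p + 1) =
      hankelSymbol ν (p + 1) + (2 * ν + 2 * p + 1) * hankelSymbol ν p := by
  induction p with
  | zero => simp [hankelSymbol_succ]; ring
  | succ p ih =>
    rw [hankelSymbol_succ (ν + 1) (p + 1), ih, hankelSymbol_succ ν (p + 1),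
      hankelSymbol_succ ν p]
    push_cast
    field_simp
    ring

noncomputable def hankelSeries (ν : ℝ) : ℝ⟦X⟧ :=
  mk fun p => hankelSymbol ν p / 2 ^ p

@[simp]
theorem coeff_hankelSeries (ν : ℝ) (p : ℕ) :
    coeff p (hankelSeries ν) = hankelSymbol ν p / 2 ^ p :=
  coeff_mk _ _

@[simp]
theorem constantCoeff_hankelSeries (ν : ℝ) : constantCoeff (hankelSeries ν) = 1 := by
  simp [← coeff_zero_eq_constantCoeff_apply]

theorem hankelSeries_add_one (ν : ℝ) :
    hankelSeries (ν + 1) =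
      hankelSeries ν * (1 + C (ν + 1 / 2) * X) + X * (X * d⁄dX ℝ (hankelSeries ν)) := by
  ext (_ | p)
  · simp
  rw [mul_add, mul_one, map_add, map_add, coeff_succ_X_mul, coeff_X_mul_derivative,
    ← mul_assoc, coeff_succ_mul_X, coeff_mul_C]
  simp only [coeff_hankelSeries, hankelSymbol_add_one_succ, pow_succ]
  field_simp
  ring

theorem X_pow_dvd_X_mul_derivative_hankelSeries_sub {ν : ℝ} {M : ℕ} {a : ℕ → ℝ}
    (h : X ^ (M + 1) ∣ hankelSeries (ν + 1) - hankelSeries ν * mk a) :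
    X ^ M ∣ X * d⁄dX ℝ (hankelSeries ν) -
      hankelSeries ν * (mk (fun k => a (k + 1)) - C (ν + 1 / 2)) := by
  have ha₀ : a 0 = 1 := by
    have := X_pow_dvd_iff.mp h 0 M.succ_pos
    simp at this
    linarith
  have hshift := eq_X_mul_shift_add_const (mk a)
  simp only [coeff_mk, ← coeff_zero_eq_constantCoeff_apply, ha₀, map_one] at hshift
  rw [hankelSeries_add_one, hshift, pow_succ', mul_comm] at h
  refine (mul_dvd_mul_iff_right X_ne_zero).mp ?_
  convert h using 1
  ring

theorem dcoef_closed_form_general (n M : ℕ) (x : ℝ) (a d : ℕ → ℝ)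
    (hd0 : d 0 = 1)
    (hd : ∀ m, 1 ≤ m →
      d m = (1 / (m : ℝ)) * ∑ k ∈ Finset.Icc 1 m,
        d (m - k) * (a (k + 1) + (-1 : ℝ) ^ k * x ^ k))
    (ha : ∀ m ≤ M,
      hankelSymbol (2 * n + 3 / 2 + 1) m / 2 ^ m =
        ∑ k ∈ Finset.range (m + 1),
          hankelSymbol (2 * n + 3 / 2) (m - k) / 2 ^ (m - k) * a k) :
    ∀ m ≤ M - 1,
      d m = ∑ k ∈ Finset.range (m + 1),
        (-1 : ℝ) ^ k * (hankelSymbol (2 * n + 3 / 2) (m - k) / 2 ^ (m - k)) * x ^ k := by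
  intro m hm
  rcases Nat.eq_zero_or_pos M with rfl | hM
  · obtain rfl : m = 0 := by omega
    simp [hd0]
  set ν : ℝ := 2 * n + 3 / 2
  have hB : X ^ M ∣ X * d⁄dX ℝ (hankelSeries ν) -
      hankelSeries ν * (mk (fun k => a (k + 1)) - C (ν + 1 / 2)) := by
    refine X_pow_dvd_X_mul_derivative_hankelSeries_sub (X_pow_dvd_iff.mpr fun k hk => ?_)
    rw [map_sub, coeff_hankelSeries, hankelSeries, coeff_mk_mul_mk, ha k (by omega), sub_self]
  have ha₁ : a 1 = ν + 1 / 2 := by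
    have := constantCoeff_mul_eq_zero_of_X_pow_dvd hM hB
    simp [constantCoeff_mk] at this
    linarith
  have hD : X * d⁄dX ℝ (mk d) = mk d *
      (mk (fun k => a (k + 1)) - C (ν + 1 / 2) + (mk ((-x) ^ ·) - 1)) := by
    rw [X_mul_derivative_mk_of_recursion hd]
    congr 1
    ext (_ | k)
    · simp [ha₁]
    · simp only [map_sub, map_add, coeff_mk, coeff_C, coeff_one, k.succ_ne_zero, if_false,
        neg_pow x]
      ring
  have hDC : X ^ M ∣ mk d - hankelSeries ν * mk ((-x) ^ ·) :=
    X_pow_dvd_sub_of_X_mul_derivative (by simp [constantCoeff_mk, hd0])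
      (by simp [constantCoeff_mk, ha₁]) (by rw [hD, sub_self]; exact dvd_zero _)
      (X_pow_dvd_X_mul_derivative_mul_mk_pow_sub (-x) hB)
  have hm' := X_pow_dvd_iff.mp hDC m (by omega)
  rw [map_sub, coeff_mk, sub_eq_zero, hankelSeries, coeff_mk_mul_mk] at hm'
  rw [hm']
  exact Finset.sum_congr rfl fun k _ => by rw [neg_pow]; ring

theorem dcoef_closed_form (n M : ℕ) (x : ℝ) (hx : 0 < x) (a d : ℕ → ℝ)
    (hd0 : d 0 = 1)
    (hd : ∀ m, 1 ≤ m →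
      d m = (1 / (m : ℝ)) * ∑ k ∈ Finset.Icc 1 m,
        d (m - k) * (a (k + 1) + (-1 : ℝ) ^ k * x ^ k))
    (ha : ∀ m ≤ M,
      hankelSymbol (2 * n + 3 / 2 + 1) m / 2 ^ m =
        ∑ k ∈ Finset.range (m + 1),
          hankelSymbol (2 * n + 3 / 2) (m - k) / 2 ^ (m - k) * a k) :
    ∀ m ≤ M - 1,
      d m = ∑ k ∈ Finset.range (m + 1),
        (-1 : ℝ) ^ k * (hankelSymbol (2 * n + 3 / 2) (m - k) / 2 ^ (m - k)) * x ^ k :=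
  dcoef_closed_form_general n M x a d hd0 hd ha
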